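/- Let p(x) be a homogeneous polynomial of degree d on ℝ^n and let s ∈ (0,1), a = 1−2s. Define q(x,y) = Σ_{0 ≤ k ≤ d/2} (-1)^k c_{2k} Δ^k p(x) · y^{2k}/(2k)!, where c_{2k} = ∏_{i=1}^k (2i−1)/(2i−2s) and Δ^k is the k-fold Laplacian in x. Then q is a polynomial of degree d on ℝ^{n+1}, symmetric in y, with q(x,0) = p(x), and q satisfies the extension equation Δ_x q + ∂_{yy} q + (a/y) ∂_y q = 0 at every point with y ≠ 0. -/

import Mathlib

noncomputable section

/-- Partial derivative in the `i`-th direction of a function on `ℝⁿ`. -/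
def pd {n : ℕ} (i : Fin n) (f : (Fin n → ℝ) → ℝ) (x : Fin n → ℝ) : ℝ :=
  deriv (fun t => f (Function.update x i t)) (x i)

/-- The Laplacian on `ℝⁿ` computed in coordinates. -/
def lap {n : ℕ} (f : (Fin n → ℝ) → ℝ) : (Fin n → ℝ) → ℝ :=
  fun x => ∑ i, pd i (pd i f) x

/-- The coefficients `c_{2k} = ∏_{i=1}^k (2i-1)/(2i-2s)`. -/
def cExt (s : ℝ) (k : ℕ) : ℝ :=
  ∏ i ∈ Finset.Icc 1 k, ((2 * (i : ℝ) - 1) / (2 * (i : ℝ) - 2 * s))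

/-- The explicit extension `q(x,y) = Σ_k (-1)^k c_{2k} Δ^k p(x) y^{2k}/(2k)!`. -/
def qExt (n : ℕ) (s : ℝ) (d : ℕ) (p : (Fin n → ℝ) → ℝ) (x : Fin n → ℝ) (y : ℝ) : ℝ :=
  ∑ k ∈ Finset.range (d / 2 + 1),
    (-1 : ℝ) ^ k * cExt s k * (lap^[k] p) x * y ^ (2 * k) / (Nat.factorial (2 * k) : ℝ)

/-!
Write `q = ∑ₖ αₖ Δᵏp(x) y²ᵏ` with `αₖ = (-1)ᵏ c₂ₖ / (2k)!`. The operator `∂_yy + (a/y) ∂_y`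
sends `y²ᵏ⁺²` to `(2k+2)(2k+1+a) y²ᵏ`, and `αₖ₊₁ (2k+2)(2k+2-2s) = -αₖ`, so its action on the
`(k+1)`-st term cancels `Δₓ` of the `k`-th one; the last `Δₓ` term vanishes since `Δ^{d/2+1} p = 0`
by homogeneity. All `x`-derivatives are computed on polynomials, where the coordinate partial
derivatives `pd i` agree with `MvPolynomial.pderiv i`.
-/

open MvPolynomial Finset

section PolynomialCalculus

variable {𝕜 σ : Type*} [NontriviallyNormedField 𝕜] [DecidableEq σ]

theorem MvPolynomial.hasDerivAt_eval_update (Q : MvPolynomial σ 𝕜) (i : σ) (x : σ → 𝕜) (t : 𝕜) :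
    HasDerivAt (fun t => eval (Function.update x i t) Q)
      (eval (Function.update x i t) (pderiv i Q)) t := by
  induction Q using MvPolynomial.induction_on with
  | C a => simpa using hasDerivAt_const t a
  | add f g hf hg => simpa using hf.fun_add hg
  | mul_X f j hf =>
    rcases eq_or_ne j i with rfl | hji
    · simpa [pderiv_mul, add_comm, mul_comm] using hf.fun_mul (hasDerivAt_id t)
    · simpa [pderiv_mul, pderiv_X_of_ne hji, Function.update_of_ne hji, mul_comm]
        using hf.mul_const (x j)

end PolynomialCalculus

theorem pd_eval {n : ℕ} (Q : MvPolynomial (Fin n) ℝ) (i : Fin n) :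
    pd i (fun x => eval x Q) = fun x => eval x (pderiv i Q) := by
  funext x
  simpa [pd] using (hasDerivAt_eval_update Q i x (x i)).deriv

namespace MvPolynomial

variable {R σ : Type*} [CommSemiring R]

theorem IsHomogeneous.pderiv_eq_zero {Q : MvPolynomial σ R} (h : Q.IsHomogeneous 0) (i : σ) :
    pderiv i Q = 0 := by
  rw [← totalDegree_zero_iff_isHomogeneous, totalDegree_eq_zero_iff_eq_C] at h
  rw [h, pderiv_C]

variable [Fintype σ]

def lapPoly : MvPolynomial σ R →ₗ[R] MvPolynomial σ R :=
  ∑ i, (pderiv i).toLinearMap ∘ₗ (pderiv i).toLinearMap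

theorem lapPoly_apply (Q : MvPolynomial σ R) : lapPoly Q = ∑ i, pderiv i (pderiv i Q) := by
  simp [lapPoly]

theorem isHomogeneous_lapPoly {Q : MvPolynomial σ R} {m : ℕ} (h : Q.IsHomogeneous m) :
    (lapPoly Q).IsHomogeneous (m - 2) := by
  rw [lapPoly_apply]
  exact IsHomogeneous.sum _ _ _ fun i _ => by simpa [Nat.sub_sub] using (h.pderiv (i := i)).pderiv (i := i)

theorem isHomogeneous_iterate_lapPoly {Q : MvPolynomial σ R} {d : ℕ} (h : Q.IsHomogeneous d)
    (k : ℕ) : (lapPoly^[k] Q).IsHomogeneous (d - 2 * k) := by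
  induction k with
  | zero => simpa using h
  | succ k ih =>
    rw [Function.iterate_succ_apply', show d - 2 * (k + 1) = d - 2 * k - 2 by omega]
    exact isHomogeneous_lapPoly ih

theorem lapPoly_eq_zero_of_isHomogeneous {Q : MvPolynomial σ R} {m : ℕ} (h : Q.IsHomogeneous m)
    (hm : m ≤ 1) : lapPoly Q = 0 := by
  have h' : ∀ i, (pderiv i Q).IsHomogeneous 0 := fun i => by
    simpa [show m - 1 = 0 by omega] using h.pderiv (i := i)
  simp [lapPoly_apply, fun i => (h' i).pderiv_eq_zero i]

theorem iterate_lapPoly_eq_zero_of_isHomogeneous {Q : MvPolynomial σ R} {d : ℕ}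
    (h : Q.IsHomogeneous d) : lapPoly^[d / 2 + 1] Q = 0 := by
  rw [Function.iterate_succ_apply']
  exact lapPoly_eq_zero_of_isHomogeneous (isHomogeneous_iterate_lapPoly h (d / 2)) (by omega)

end MvPolynomial

theorem lap_eval {n : ℕ} (Q : MvPolynomial (Fin n) ℝ) :
    lap (fun x => eval x Q) = fun x => eval x (lapPoly Q) := by
  funext x
  simp [lap, pd_eval, lapPoly_apply]

theorem iterate_lap_eval {n : ℕ} (Q : MvPolynomial (Fin n) ℝ) (k : ℕ) :
    lap^[k] (fun x => eval x Q) = fun x => eval x (lapPoly^[k] Q) := by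
  induction k generalizing Q with
  | zero => rfl
  | succ k ih => rw [Function.iterate_succ_apply, Function.iterate_succ_apply, lap_eval, ih]

section EvenPowerSeries

variable {𝕜 : Type*} [NontriviallyNormedField 𝕜]

theorem hasDerivAt_sum_mul_pow_succ (t : Finset ℕ) (β : ℕ → 𝕜) (e : ℕ → ℕ) (y : 𝕜) :
    HasDerivAt (fun u => ∑ k ∈ t, β k * u ^ (e k + 1)) (∑ k ∈ t, β k * (e k + 1) * y ^ e k) y :=
  HasDerivAt.fun_sum fun k _ => by
    simpa [mul_assoc] using (hasDerivAt_pow (e k + 1) y).const_mul (β k)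

theorem deriv_deriv_add_div_mul_deriv_sum_even_pow (m : ℕ) (β : ℕ → 𝕜) (a : 𝕜) {y : 𝕜}
    (hy : y ≠ 0) :
    deriv (deriv fun t => ∑ k ∈ range (m + 1), β k * t ^ (2 * k)) y +
        a / y * deriv (fun t => ∑ k ∈ range (m + 1), β k * t ^ (2 * k)) y =
      ∑ k ∈ range m, β (k + 1) * ((2 * k + 2) * (2 * k + 1 + a)) * y ^ (2 * k) := by
  have hf : (fun t : 𝕜 => ∑ k ∈ range (m + 1), β k * t ^ (2 * k)) =
      fun t => β 0 + ∑ k ∈ range m, β (k + 1) * t ^ (2 * k + 1 + 1) := by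
    funext t
    rw [sum_range_succ', add_comm]
    simp [mul_add]
  have h1 : ∀ t : 𝕜, HasDerivAt (fun t => β 0 + ∑ k ∈ range m, β (k + 1) * t ^ (2 * k + 1 + 1))
      (∑ k ∈ range m, β (k + 1) * ((2 * k + 1 : ℕ) + 1) * t ^ (2 * k + 1)) t := fun t =>
    (hasDerivAt_sum_mul_pow_succ _ (fun k => β (k + 1)) (fun k => 2 * k + 1) t).const_add (β 0)
  have h2 := hasDerivAt_sum_mul_pow_succ (range m) (fun k => β (k + 1) * ((2 * k + 1 : ℕ) + 1))
    (fun k => 2 * k) y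
  rw [hf, funext fun t => (h1 t).deriv, h2.deriv]
  beta_reduce
  rw [mul_sum, ← sum_add_distrib]
  refine sum_congr rfl fun k _ => ?_
  push_cast
  field_simp
  ring

end EvenPowerSeries

theorem cExt_succ (s : ℝ) (k : ℕ) :
    cExt s (k + 1) = cExt s k * ((2 * k + 1) / (2 * k + 2 - 2 * s)) := by
  rw [cExt, prod_Icc_succ_top (by omega), ← cExt]
  push_cast
  ring_nf

def extCoeff (s : ℝ) (k : ℕ) : ℝ :=
  (-1) ^ k * cExt s k / (2 * k).factorial

theorem extCoeff_succ_mul {s : ℝ} {k : ℕ} (hs : s ≠ k + 1) :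
    extCoeff s (k + 1) * ((2 * k + 2) * (2 * k + 2 - 2 * s)) = -extCoeff s k := by
  have hden : (2 * k + 2 - 2 * s : ℝ) ≠ 0 := fun h => hs (by linarith)
  rw [extCoeff, extCoeff, cExt_succ, show 2 * (k + 1) = 2 * k + 1 + 1 by ring,
    Nat.factorial_succ, Nat.factorial_succ]
  push_cast
  field_simp
  ring

section Extension

variable {n : ℕ} (s : ℝ) (d : ℕ)

theorem qExt_eq_sum (p : (Fin n → ℝ) → ℝ) (x : Fin n → ℝ) (y : ℝ) :
    qExt n s d p x y = ∑ k ∈ range (d / 2 + 1), extCoeff s k * (lap^[k] p) x * y ^ (2 * k) :=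
  sum_congr rfl fun k _ => by rw [extCoeff]; ring

theorem qExt_neg (p : (Fin n → ℝ) → ℝ) (x : Fin n → ℝ) (y : ℝ) :
    qExt n s d p x (-y) = qExt n s d p x y :=
  sum_congr rfl fun k _ => by rw [(even_two_mul k).neg_pow]

theorem qExt_zero (p : (Fin n → ℝ) → ℝ) (x : Fin n → ℝ) : qExt n s d p x 0 = p x := by
  rw [qExt_eq_sum, sum_eq_single_of_mem 0 (by simp) fun k _ hk => by simp [hk]]
  simp [extCoeff, cExt]

def extPoly (P : MvPolynomial (Fin n) ℝ) : MvPolynomial (Fin (n + 1)) ℝ :=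
  ∑ k ∈ range (d / 2 + 1),
    C (extCoeff s k) * rename Fin.castSucc (lapPoly^[k] P) * X (Fin.last n) ^ (2 * k)

variable {s d}

theorem qExt_eq_eval_extPoly (P : MvPolynomial (Fin n) ℝ) (x : Fin n → ℝ) (y : ℝ) :
    qExt n s d (fun x => eval x P) x y = eval (Fin.snoc x y) (extPoly s d P) := by
  have hx : (Fin.snoc x y : Fin (n + 1) → ℝ) ∘ Fin.castSucc = x := funext fun i => by simp
  simp [qExt_eq_sum, extPoly, iterate_lap_eval, eval_rename, hx]

theorem isHomogeneous_extPoly {P : MvPolynomial (Fin n) ℝ} (hP : P.IsHomogeneous d) :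
    (extPoly s d P).IsHomogeneous d := by
  refine IsHomogeneous.sum _ _ _ fun k hk => ?_
  have h2k : 2 * k ≤ d := by have := mem_range.mp hk; omega
  have := (((isHomogeneous_C _ (extCoeff s k)).mul
    ((isHomogeneous_iterate_lapPoly hP k).rename_isHomogeneous (f := Fin.castSucc))).mul
    (isHomogeneous_X_pow (Fin.last n) (2 * k)))
  rwa [show 0 + (d - 2 * k) + 2 * k = d by omega] at this

theorem extPoly_ne_zero {P : MvPolynomial (Fin n) ℝ} (hP0 : P ≠ 0) : extPoly s d P ≠ 0 := by
  refine fun h => hP0 (MvPolynomial.funext fun x => ?_)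
  rw [← qExt_zero s d (fun x => eval x P) x, qExt_eq_eval_extPoly, h]
  simp

theorem lap_qExt_eval (P : MvPolynomial (Fin n) ℝ) (x : Fin n → ℝ) (y : ℝ) :
    lap (fun x' => qExt n s d (fun x => eval x P) x' y) x =
      ∑ k ∈ range (d / 2 + 1), extCoeff s k * eval x (lapPoly^[k + 1] P) * y ^ (2 * k) := by
  have hq : (fun x' => qExt n s d (fun x => eval x P) x' y) = fun x' =>
      eval x' (∑ k ∈ range (d / 2 + 1), (extCoeff s k * y ^ (2 * k)) • lapPoly^[k] P) := by
    funext x'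
    simp [qExt_eq_sum, iterate_lap_eval, smul_eval, mul_right_comm]
  rw [hq, lap_eval, map_sum]
  simp [Function.iterate_succ_apply', smul_eval, mul_right_comm]

theorem qExt_extension_equation {P : MvPolynomial (Fin n) ℝ} (hP : P.IsHomogeneous d)
    (hs : s < 1) (x : Fin n → ℝ) {y : ℝ} (hy : y ≠ 0) :
    lap (fun x' => qExt n s d (fun x => eval x P) x' y) x +
        deriv (deriv fun t => qExt n s d (fun x => eval x P) x t) y +
        (1 - 2 * s) / y * deriv (fun t => qExt n s d (fun x => eval x P) x t) y = 0 := by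
  have hq : (fun t => qExt n s d (fun x => eval x P) x t) = fun t =>
      ∑ k ∈ range (d / 2 + 1), (extCoeff s k * eval x (lapPoly^[k] P)) * t ^ (2 * k) :=
    funext fun t => by simp [qExt_eq_sum, iterate_lap_eval]
  rw [lap_qExt_eval, hq, add_assoc, deriv_deriv_add_div_mul_deriv_sum_even_pow _ _ _ hy,
    sum_range_succ, iterate_lapPoly_eq_zero_of_isHomogeneous hP, map_zero, mul_zero, zero_mul,
    add_zero, ← sum_add_distrib]
  refine sum_eq_zero fun k _ => ?_
  have hk : s ≠ k + 1 := by have := k.cast_nonneg (α := ℝ); intro h; linarith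
  linear_combination (eval x (lapPoly^[k + 1] P) * y ^ (2 * k)) * extCoeff_succ_mul hk

end Extension

/-- For a nonzero homogeneous polynomial `p` of degree `d` on `ℝⁿ` and
`s ∈ (0,1)`, `a = 1-2s`, the explicit function `qExt` is a polynomial of degree `d` on
`ℝ^{n+1}`, symmetric in `y`, restricting to `p` on `{y=0}`, and solves the extension
equation `Δ_x q + ∂_{yy} q + (a/y)∂_y q = 0` away from `{y=0}`. -/
theorem explicit_even_extension (n d : ℕ) (s : ℝ) (hs : s ∈ Set.Ioo (0 : ℝ) 1)
    (P : MvPolynomial (Fin n) ℝ) (hP : P.IsHomogeneous d) (hP0 : P ≠ 0)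
    (p : (Fin n → ℝ) → ℝ) (hp : ∀ x, p x = MvPolynomial.eval x P) :
    (∃ Q : MvPolynomial (Fin (n + 1)) ℝ, Q.totalDegree = d ∧
      ∀ (x : Fin n → ℝ) (y : ℝ), qExt n s d p x y = MvPolynomial.eval (Fin.snoc x y) Q) ∧
    (∀ (x : Fin n → ℝ) (y : ℝ), qExt n s d p x (-y) = qExt n s d p x y) ∧
    (∀ x : Fin n → ℝ, qExt n s d p x 0 = p x) ∧
    (∀ (x : Fin n → ℝ) (y : ℝ), y ≠ 0 →
      lap (fun x' => qExt n s d p x' y) x +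
        deriv (deriv (fun t => qExt n s d p x t)) y +
        ((1 - 2 * s) / y) * deriv (fun t => qExt n s d p x t) y = 0) := by
  obtain rfl : p = fun x => eval x P := funext hp
  exact ⟨⟨extPoly s d P, (isHomogeneous_extPoly hP).totalDegree (extPoly_ne_zero hP0),
      qExt_eq_eval_extPoly P⟩, qExt_neg s d _, qExt_zero s d _,
    fun x _ hy => qExt_extension_equation hP hs.2 x hy⟩
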